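/- For every integer k ≥ 2 and every n ∈ ℕ, C_k(n) ≥ Σ_{p=0}^{n} C_{k−1}(n−p)^(p+1). -/

import Mathlib

/-- Simon's congruence: `x ∼ₙ y` iff `x` and `y` have the same subwords
(scattered subsequences) of length at most `n`. -/
def SimonCong {α : Type*} (n : ℕ) (x y : List α) : Prop :=
  ∀ w : List α, w.length ≤ n → (w.Sublist x ↔ w.Sublist y)

/-- Simon's congruence as a setoid on words over `α`. -/
def simonSetoid (α : Type*) (n : ℕ) : Setoid (List α) :=
  ⟨SimonCong n,
    ⟨fun _ _ _ => Iff.rfl,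
     fun h w hw => (h w hw).symm,
     fun h1 h2 w hw => (h1 w hw).trans (h2 w hw)⟩⟩

/-- `simonIndex k n` is `C_k(n)`, the number of equivalence classes of
Simon's congruence `∼ₙ` over a `k`-letter alphabet. -/
noncomputable def simonIndex (k n : ℕ) : ℕ :=
  Nat.card (Quotient (simonSetoid (Fin k) n))

/-!
Adjoin a fresh letter `a` to the smaller alphabet. For `p ≤ n`, the word `u₀ a u₁ a ⋯ a u_p` with
`a`-free factors contains `a` exactly `p ≤ n` times, which `∼ₙ` sees through the subword `aᵖ`;
and `aⁱ v aᵖ⁻ⁱ` (with `v` free of `a`) is a subword of it iff `v` is a subword of `uᵢ`. So the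
`∼ₙ`-class of the word determines `p` and the `∼ₙ₋ₚ`-classes of all `p + 1` factors, which
gives an injection of `Σ_{p ≤ n} (classes of ∼ₙ₋ₚ)^(p+1)` into the classes of `∼ₙ`.
-/

open Function

namespace List

variable {α β : Type*}

theorem map_sublist_map_iff {f : α → β} (hf : Injective f) {l₁ l₂ : List α} :
    l₁.map f <+ l₂.map f ↔ l₁ <+ l₂ := by
  refine ⟨fun h => ?_, (·.map f)⟩
  obtain ⟨l, hl, he⟩ := sublist_map_iff.mp h
  rwa [map_injective_iff.mpr hf he]

variable [DecidableEq α] {a : α}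

theorem count_intercalate_singleton :
    ∀ {ws : List (List α)}, (∀ w ∈ ws, a ∉ w) → ([a].intercalate ws).count a = ws.length - 1
  | [], _ => rfl
  | [w], hws => by simpa using count_eq_zero_of_not_mem (hws w mem_cons_self)
  | w :: w' :: ws, hws => by
    have hw : a ∉ w := hws w mem_cons_self
    rw [intercalate_cons_cons, count_append, count_append,
      count_intercalate_singleton fun u hu => hws u (mem_cons_of_mem _ hu)]
    simp [count_eq_zero_of_not_mem hw]
    omega

/-- The count condition forces the displayed `a` on the left to be matched with the displayed `a`
on the right. -/
theorem sublist_and_sublist_of_append_cons_sublist_append_cons {x t u w : List α}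
    (hx : a ∉ x) (hu : a ∉ u) (hc : w.count a ≤ t.count a) (h : x ++ a :: t <+ u ++ a :: w) :
    x <+ u ∧ t <+ w := by
  induction u generalizing x with
  | nil =>
    cases x with
    | nil => exact ⟨nil_sublist _, cons_sublist_cons.mp h⟩
    | cons b x =>
      exfalso
      have hb : b ≠ a := fun e => hx (e ▸ mem_cons_self)
      rcases cons_sublist_cons'.mp h with h | ⟨rfl, _⟩
      · have := h.count_le a
        simp [count_append, hb] at this
        omega
      · exact hb rfl
  | cons c u ih =>
    have hu' : a ∉ u := fun hm => hu (mem_cons_of_mem _ hm)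
    cases x with
    | nil =>
      rcases cons_sublist_cons'.mp h with h | ⟨rfl, _⟩
      · exact ⟨nil_sublist _, (ih hx hu' h).2⟩
      · exact absurd mem_cons_self hu
    | cons b x =>
      rcases cons_sublist_cons'.mp h with h' | ⟨rfl, h'⟩
      · exact (ih hx hu' h').imp_left (·.cons c)
      · exact (ih (fun hm => hx (mem_cons_of_mem _ hm)) hu' h').imp_left (·.cons_cons b)

theorem replicate_append_append_replicate_sublist_intercalate_iff {v : List α} (hv : a ∉ v) :
    ∀ {ws : List (List α)} {i j : ℕ}, (∀ w ∈ ws, a ∉ w) → (hij : i + j + 1 = ws.length) →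
      (replicate i a ++ v ++ replicate j a <+ [a].intercalate ws ↔ v <+ ws[i])
  | [], _, _, _, hij => by simp at hij
  | [w], i, j, _, hij => by
    obtain ⟨rfl, rfl⟩ : i = 0 ∧ j = 0 := by simp at hij; omega
    simp
  | w :: w' :: ws, 0, j, hws, hij => by
    have hw : a ∉ w := hws w mem_cons_self
    have hcount : ([a].intercalate (w' :: ws)).count a = ws.length := by
      rw [count_intercalate_singleton fun u hu => hws u (mem_cons_of_mem _ hu)]
      simp
    obtain rfl : j = ws.length + 1 := by simp at hij; omega
    simp only [intercalate_cons_cons, replicate_zero, nil_append, replicate_succ, append_assoc,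
      singleton_append, getElem_cons_zero]
    constructor
    · intro hs
      exact (sublist_and_sublist_of_append_cons_sublist_append_cons hv hw (by simp [hcount]) hs).1
    · intro hs
      exact hs.append ((replicate_sublist_iff.mpr hcount.ge).cons_cons a)
  | w :: w' :: ws, i + 1, j, hws, hij => by
    have hw : a ∉ w := hws w mem_cons_self
    have hws' : ∀ u ∈ w' :: ws, a ∉ u := fun u hu => hws u (mem_cons_of_mem _ hu)
    have hcount :
        ([a].intercalate (w' :: ws)).count a ≤ (replicate i a ++ v ++ replicate j a).count a := by
      simp [count_intercalate_singleton hws', count_eq_zero_of_not_mem hv] at hij ⊢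
      omega
    rw [getElem_cons_succ, ← replicate_append_append_replicate_sublist_intercalate_iff
      (i := i) (j := j) hv hws' (by simp at hij ⊢; omega)]
    simp only [intercalate_cons_cons, append_assoc, replicate_succ, cons_append] at hcount ⊢
    constructor
    · intro hs
      exact (sublist_and_sublist_of_append_cons_sublist_append_cons (x := []) not_mem_nil hw
        hcount hs).2
    · intro hs
      exact (hs.cons_cons a).trans (sublist_append_right _ _)

end List

instance {α : Type*} [Finite α] (n : ℕ) : Finite (Quotient (simonSetoid α n)) := by
  have : Finite {w : List α // w.length ≤ n} := (List.finite_length_le α n).to_subtype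
  refine Finite.of_injective
    (Quotient.lift (fun x (w : {w : List α // w.length ≤ n}) => w.1.Sublist x)
      fun x y h => funext fun w => propext (h w.1 w.2)) ?_
  rintro ⟨x⟩ ⟨y⟩ h
  exact Quotient.sound fun w hw => iff_of_eq (congrFun h ⟨w, hw⟩)

namespace SimonCong

variable {α β : Type*} {n : ℕ}

theorem count_le [DecidableEq α] {x y : List α} (h : SimonCong n x y) (a : α)
    (hx : x.count a ≤ n) : x.count a ≤ y.count a :=
  List.replicate_sublist_iff.mp ((h _ (by simpa)).mp (List.replicate_sublist_iff.mpr le_rfl))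

theorem of_map {ι : β → α} (hι : Injective ι) {x y : List β}
    (h : SimonCong n (x.map ι) (y.map ι)) : SimonCong n x y := fun v hv => by
  simpa only [List.map_sublist_map_iff hι] using h (v.map ι) (by simpa)

theorem apply_of_intercalate_ofFn [DecidableEq α] {a : α} {p : ℕ} {f g : Fin (p + 1) → List α}
    (hf : ∀ i, a ∉ f i) (hg : ∀ i, a ∉ g i)
    (h : SimonCong n ([a].intercalate (List.ofFn f)) ([a].intercalate (List.ofFn g)))
    (i : Fin (p + 1)) : SimonCong (n - p) (f i) (g i) := by
  rintro (_ | ⟨b, v⟩) hv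
  · simp
  by_cases hav : a ∈ b :: v
  · exact iff_of_false (fun hs => hf i (hs.subset hav)) (fun hs => hg i (hs.subset hav))
  have key {f : Fin (p + 1) → List α} (hf : ∀ i, a ∉ f i) :
      (List.replicate i a ++ b :: v ++ List.replicate (p - i) a).Sublist
        ([a].intercalate (List.ofFn f)) ↔ (b :: v).Sublist (f i) := by
    have hsep : ∀ w ∈ List.ofFn f, a ∉ w := by
      simp only [List.mem_ofFn, forall_exists_index, forall_apply_eq_imp_iff]
      exact hf
    rw [List.replicate_append_append_replicate_sublist_intercalate_iff hav hsep
      (by simp; omega), List.getElem_ofFn]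
  rw [← key hf, ← key hg]
  exact h _ (by simp at hv ⊢; omega)

end SimonCong

theorem sum_card_quotient_simonSetoid_pow_le {α β : Type*} [Finite α] {ι : β → α}
    (hι : Injective ι) {a : α} (ha : ∀ b, ι b ≠ a) (n : ℕ) :
    ∑ p ∈ Finset.range (n + 1), Nat.card (Quotient (simonSetoid β (n - p))) ^ (p + 1) ≤
      Nat.card (Quotient (simonSetoid α n)) := by
  classical
  have : Finite β := .of_injective ι hι
  let pieces (p : ℕ) (c : Fin (p + 1) → Quotient (simonSetoid β (n - p))) : List (List α) :=
    List.ofFn fun i => (c i).out.map ι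
  have hcount (p c) : ([a].intercalate (pieces p c)).count a = p := by
    rw [List.count_intercalate_singleton (by simp [pieces, ha])]
    simp [pieces]
  have hle {p q : Fin (n + 1)} (c d)
      (h : SimonCong n ([a].intercalate (pieces p c)) ([a].intercalate (pieces q d))) :
      (p : ℕ) ≤ q := by
    simpa [hcount] using h.count_le a (by simp [hcount]; omega)
  let F (s : Σ p : Fin (n + 1), Fin (p + 1) → Quotient (simonSetoid β (n - p))) :
      Quotient (simonSetoid α n) :=
    ⟦[a].intercalate (pieces s.1 s.2)⟧
  have hF : Injective F := by
    rintro ⟨p, c⟩ ⟨q, d⟩ hpq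
    have h : SimonCong n _ _ := Quotient.exact hpq
    obtain rfl : p = q := Fin.ext <| le_antisymm (hle c d h) (hle d c fun w hw => (h w hw).symm)
    have hpiece (i) : SimonCong (n - p) (c i).out (d i).out :=
      SimonCong.of_map hι <| h.apply_of_intercalate_ofFn (by simp [ha]) (by simp [ha]) i
    obtain rfl : c = d := funext fun i => Quotient.out_equiv_out.mp (hpiece i)
    rfl
  calc ∑ p ∈ Finset.range (n + 1), Nat.card (Quotient (simonSetoid β (n - p))) ^ (p + 1)
      = Nat.card (Σ p : Fin (n + 1), Fin (p + 1) → Quotient (simonSetoid β (n - p))) := by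
        rw [Nat.card_sigma, ← Fin.sum_univ_eq_sum_range]
        simp [Nat.card_fun]
    _ ≤ Nat.card (Quotient (simonSetoid α n)) := Nat.card_le_card_of_injective F hF

theorem simon_index_ge_sum (k n : ℕ) (hk : 2 ≤ k) :
    simonIndex k n ≥ ∑ p ∈ Finset.range (n + 1), simonIndex (k - 1) (n - p) ^ (p + 1) :=
  sum_card_quotient_simonSetoid_pow_le (Fin.castLE_injective (Nat.sub_le k 1))
    (a := ⟨k - 1, by omega⟩) (fun b h => b.isLt.ne (congrArg Fin.val h)) n
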